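/- For every type expression A, the following four conditions are equivalent: (a) A ∈ TF (where TF = TF^∅); (b) A is tail finite; (c) A ≁ ⊤, i.e., neither A ≅ ⊤ nor A ≃ ⊤ holds; (d) A is not a ⊤-variant. -/

import Mathlib

namespace LambdaA

/-! ### Type expressions (de Bruijn representation for `μ`-binders) -/

inductive Ty : Type
  | var : ℕ → Ty
  | arrow : Ty → Ty → Ty
  | box : Ty → Ty
  | mu : Ty → Ty
  deriving DecidableEq

namespace Ty

def rename : (ℕ → ℕ) → Ty → Ty
  | f, var n => var (f n)
  | f, arrow A B => arrow (rename f A) (rename f B)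
  | f, box A => box (rename f A)
  | f, mu A => mu (rename (fun n => match n with | 0 => 0 | Nat.succ m => f m + 1) A)

def shiftUp : Ty → Ty := rename Nat.succ

def subst : (ℕ → Ty) → Ty → Ty
  | σ, var n => σ n
  | σ, arrow A B => arrow (subst σ A) (subst σ B)
  | σ, box A => box (subst σ A)
  | σ, mu A => mu (subst (fun n => match n with | 0 => var 0 | Nat.succ m => shiftUp (σ m)) A)

end Ty

/-- `openT A B`: instantiate the outermost bound variable (index `0`) of the body `A` by `B`. -/
def openT (A B : Ty) : Ty :=
  Ty.subst (fun n => match n with | 0 => B | Nat.succ m => Ty.var m) A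

/-- `substFree A X B` is the capture-avoiding substitution `A[B/X]` for the free variable `X`. -/
def substFree (A : Ty) (X : ℕ) (B : Ty) : Ty :=
  Ty.subst (fun n => if n = X then B else Ty.var n) A

/-- The unfolding `μX.A ↦ A[μX.A/X]` of a recursive type. -/
def unfoldMu (A : Ty) : Ty := openT A (Ty.mu A)

/-- Free occurrence of a type variable in a type expression. -/
def freeInTy : ℕ → Ty → Prop
  | X, .var n => n = X
  | X, .arrow A B => freeInTy X A ∨ freeInTy X B
  | X, .box A => freeInTy X A
  | X, .mu A => freeInTy (X + 1) A

/-- Auxiliary ⊤-variant test.  `tvAux A d t` scans the tail of `A`, where `d` is the number of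
`μ`-binders passed so far and `t` is the number of (outermost) such binders inside which a `•`
has already been encountered.  A variable qualifies iff it is bound by one of the `μ`-binders
and at least one `•` occurs inside that binder. -/
def tvAux : Ty → ℕ → ℕ → Bool
  | .var j, d, t => decide (d - t ≤ j ∧ j < d)
  | .box A, d, _ => tvAux A d d
  | .mu A, d, t => tvAux A (d + 1) t
  | .arrow _ B, d, t => tvAux B d t

/-- `A` is a ⊤-variant. -/
def IsTV (A : Ty) : Prop := tvAux A 0 0 = true

/-- `Proper A X` : the type expression `A` is proper in the (free) variable `X`. -/
def Proper : Ty → ℕ → Prop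
  | .var n, X => n ≠ X
  | .box _, _ => True
  | .arrow A B, X => (Proper A X ∧ Proper B X) ∨ IsTV B
  | .mu A, X => Proper A (X + 1) ∨ IsTV (.mu A)

/-- Well-formed type expressions: every recursive type `μX.A` has `A` proper in `X`. -/
def WF : Ty → Prop
  | .var _ => True
  | .arrow A B => WF A ∧ WF B
  | .box A => WF A
  | .mu A => WF A ∧ Proper A 0

/-- `⊤ = μX.•X`. -/
def tyTop : Ty := .mu (.box (.var 0))

/-- `•ⁿ A`. -/
def boxN (n : ℕ) (A : Ty) : Ty := Ty.box^[n] A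

/-- The equivalences `≅` (`s = false`) and `≃` (`s = true`) on type expressions. -/
inductive TyEq : Bool → Ty → Ty → Prop
  | refl (s : Bool) (A : Ty) : TyEq s A A
  | symm {s : Bool} {A B : Ty} : TyEq s A B → TyEq s B A
  | trans {s : Bool} {A B C : Ty} : TyEq s A B → TyEq s B C → TyEq s A C
  | boxCongr {s : Bool} {A B : Ty} : TyEq s A B → TyEq s (.box A) (.box B)
  | arrowCongr {s : Bool} {A B C D : Ty} :
      TyEq s A C → TyEq s B D → TyEq s (.arrow A B) (.arrow C D)
  | arrowTop (s : Bool) (A : Ty) : TyEq s (.arrow A tyTop) tyTop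
  | fix (s : Bool) (A : Ty) : TyEq s (.mu A) (unfoldMu A)
  | uniq {s : Bool} {A C : Ty} : TyEq s A (openT C A) → Proper C 0 → TyEq s A (.mu C)
  | kl (A B : Ty) : TyEq true (.box (.arrow A B)) (.arrow (.box A) (.box B))

/-! ### Subtyping -/

/-- Subtyping assumptions: finite sets of pairs of type variables. -/
abbrev Assum := Finset (ℕ × ℕ)

/-- Well-formedness of a subtyping assumption: every type variable occurs at most once. -/
def AssumOK (γ : Assum) : Prop :=
  (∀ p ∈ γ, (p : ℕ × ℕ).1 ≠ p.2) ∧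
    ∀ p ∈ γ, ∀ q ∈ γ, p ≠ q →
      (p : ℕ × ℕ).1 ≠ (q : ℕ × ℕ).1 ∧ p.1 ≠ q.2 ∧ p.2 ≠ q.1 ∧ p.2 ≠ q.2

/-- `X` occurs in the subtyping assumption `γ`. -/
def AssumVar (γ : Assum) (X : ℕ) : Prop :=
  ∃ p ∈ γ, (p : ℕ × ℕ).1 = X ∨ (p : ℕ × ℕ).2 = X

/-- Derivability of subtyping judgments `γ ⊢ A ⪯ B`. -/
inductive Sub : Assum → Ty → Ty → Prop
  | assump {γ : Assum} {X Y : ℕ} : AssumOK γ → (X, Y) ∈ γ → Sub γ (.var X) (.var Y)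
  | top {γ : Assum} (A : Ty) : AssumOK γ → Sub γ A tyTop
  | refl {γ : Assum} {A B : Ty} : AssumOK γ → TyEq true A B → Sub γ A B
  | trans {γ₁ γ₂ : Assum} {A B C : Ty} :
      Sub γ₁ A B → Sub γ₂ B C → AssumOK (γ₁ ∪ γ₂) → Sub (γ₁ ∪ γ₂) A C
  | boxMono {γ : Assum} {A B : Ty} : Sub γ A B → Sub γ (.box A) (.box B)
  | arrowMono {γ₁ γ₂ : Assum} {A A' B B' : Ty} :
      Sub γ₁ A' A → Sub γ₂ B B' → AssumOK (γ₁ ∪ γ₂) →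
      Sub (γ₁ ∪ γ₂) (.arrow A B) (.arrow A' B')
  | muMono {γ : Assum} {X Y : ℕ} {A B : Ty} :
      AssumOK (insert (X, Y) γ) →
      Sub (insert (X, Y) γ) (openT A (.var X)) (openT B (.var Y)) →
      ¬ AssumVar γ X → ¬ AssumVar γ Y →
      ¬ freeInTy X (openT B (.var Y)) → ¬ freeInTy Y (openT A (.var X)) →
      Proper (openT A (.var X)) X → Proper (openT B (.var Y)) Y →
      Sub γ (.mu A) (.mu B)
  | approx {γ : Assum} (A : Ty) : AssumOK γ → Sub γ A (.box A)

/-! ### Untyped λ-terms (locally-nameless representation) -/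

inductive Tm : Type
  | bvar : ℕ → Tm
  | fvar : ℕ → Tm
  | lam : Tm → Tm
  | app : Tm → Tm → Tm
  deriving DecidableEq

def openTmAux (N : Tm) : ℕ → Tm → Tm
  | _, .fvar y => .fvar y
  | k, .bvar i => if i = k then N else .bvar i
  | k, .lam M => .lam (openTmAux N (k + 1) M)
  | k, .app M₁ M₂ => .app (openTmAux N k M₁) (openTmAux N k M₂)

/-- Instantiate the outermost bound variable of the body `M` by `N`. -/
def openTm (M N : Tm) : Tm := openTmAux N 0 M

/-- `substTm M x N` is the substitution `M[N/x]` for the free variable `x`. -/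
def substTm : Tm → ℕ → Tm → Tm
  | .bvar i, _, _ => .bvar i
  | .fvar y, x, N => if y = x then N else .fvar y
  | .lam M, x, N => .lam (substTm M x N)
  | .app M₁ M₂, x, N => .app (substTm M₁ x N) (substTm M₂ x N)

/-- Free occurrence of an individual variable in a λ-term. -/
def freeTm : ℕ → Tm → Prop
  | _, .bvar _ => False
  | x, .fvar y => y = x
  | x, .lam M => freeTm x M
  | x, .app M₁ M₂ => freeTm x M₁ ∨ freeTm x M₂

/-- One-step β-reduction. -/
inductive Step : Tm → Tm → Prop
  | beta (M N : Tm) : Step (.app (.lam M) N) (openTm M N)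
  | appL {M M' : Tm} (N : Tm) : Step M M' → Step (.app M N) (.app M' N)
  | appR (M : Tm) {N N' : Tm} : Step N N' → Step (.app M N) (.app M N')
  | lamCongr {M M' : Tm} : Step M M' → Step (.lam M) (.lam M')

/-- `→*β`, the reflexive-transitive closure of β-reduction. -/
def Steps : Tm → Tm → Prop := Relation.ReflTransGen Step

/-- β-convertibility `=β`. -/
inductive BetaEq : Tm → Tm → Prop
  | step {M N : Tm} : Step M N → BetaEq M N
  | refl (M : Tm) : BetaEq M M
  | symm {M N : Tm} : BetaEq M N → BetaEq N M
  | trans {M N K : Tm} : BetaEq M N → BetaEq N K → BetaEq M K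

/-! ### Typing -/

/-- Typing contexts: finite sets of (variable, type) pairs. -/
abbrev Ctx := Finset (ℕ × Ty)

/-- Well-formedness of a typing context (functionality). -/
def CtxOK (Γ : Ctx) : Prop :=
  ∀ p ∈ Γ, ∀ q ∈ Γ, (p : ℕ × Ty).1 = (q : ℕ × Ty).1 → p = q

/-- `•Γ`. -/
def boxCtx (Γ : Ctx) : Ctx := Γ.image fun p => (p.1, Ty.box p.2)

/-- All types in the context are well-formed type expressions. -/
def CtxWF (Γ : Ctx) : Prop := ∀ p ∈ Γ, WF (p : ℕ × Ty).2

/-- The typing system λA. -/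
inductive Typing : Ctx → Tm → Ty → Prop
  | var {Γ : Ctx} {x : ℕ} {A : Ty} : CtxOK Γ → (x, A) ∈ Γ → Typing Γ (.fvar x) A
  | shift {Γ : Ctx} {M : Tm} {A : Ty} : Typing (boxCtx Γ) M (.box A) → Typing Γ M A
  | top {Γ : Ctx} (M : Tm) : CtxOK Γ → Typing Γ M tyTop
  | sub {Γ : Ctx} {M : Tm} {A B : Ty} : Typing Γ M A → Sub ∅ A B → Typing Γ M B
  | lamI {Γ : Ctx} {x : ℕ} {A B : Ty} {M : Tm} :
      ¬ freeTm x M →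
      Typing (insert (x, A) Γ) (openTm M (.fvar x)) B →
      Typing Γ (.lam M) (.arrow A B)
  | appE {Γ₁ Γ₂ : Ctx} {M N : Tm} {A B : Ty} :
      Typing Γ₁ M (.arrow A B) → Typing Γ₂ N A → CtxOK (Γ₁ ∪ Γ₂) →
      Typing (Γ₁ ∪ Γ₂) (.app M N) B

/-! ### Frames, λ-algebras and the semantics of types -/

/-- The accessibility relation is conversely well-founded. -/
def ConverselyWF {W : Type*} (acc : W → W → Prop) : Prop :=
  WellFounded fun q p => acc p q

/-- Local linearity of the accessibility relation. -/
def LocallyLinear {W : Type*} (acc : W → W → Prop) : Prop :=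
  ∀ p q, acc p q → ∃ r, Relation.ReflTransGen acc p r ∧ acc r q ∧
    ∀ s, acc r s → Relation.ReflTransGen acc q s

/-- Hereditary type environments. -/
def Hereditary {W : Type*} {V : Type*} (acc : W → W → Prop) (η : ℕ → W → Set V) : Prop :=
  ∀ X p q, acc p q → η X p ⊆ η X q

/-- Syntactical λ-algebras of the untyped λ-calculus. -/
structure LambdaAlgebra (V : Type*) where
  nonempty : Nonempty V
  ap : V → V → V
  den : Tm → (ℕ → V) → V
  den_fvar : ∀ x ρ, den (.fvar x) ρ = ρ x
  den_app : ∀ M N ρ, den (.app M N) ρ = ap (den M ρ) (den N ρ)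
  den_lam : ∀ M x ρ v, ¬ freeTm x M →
    ap (den (.lam M) ρ) v = den (openTm M (.fvar x)) (Function.update ρ x v)
  den_ext : ∀ M ρ ρ', (∀ x, freeTm x M → ρ x = ρ' x) → den M ρ = den M ρ'
  den_beta : ∀ M N ρ, BetaEq M N → den M ρ = den N ρ

/-- The interpretation `I(A)^η_p` of type expressions over a frame, packaged together with
its defining (recursion) equations. -/
structure Interp (W : Type*) (acc : W → W → Prop) (V : Type*) (ap : V → V → V) where
  I : Ty → (ℕ → W → Set V) → W → Set V
  I_tv : ∀ A η p, WF A → IsTV A → I A η p = Set.univ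
  I_var : ∀ X η p, I (.var X) η p = η X p
  I_box : ∀ A η p, WF A → ¬ IsTV (Ty.box A) →
    I (.box A) η p = {u | ∀ q, acc p q → u ∈ I A η q}
  I_arrow : ∀ A B η p, WF A → WF B → ¬ IsTV (Ty.arrow A B) →
    I (.arrow A B) η p =
      {u | ∀ q, Relation.ReflTransGen acc p q → ∀ v ∈ I A η q, ap u v ∈ I B η q}
  I_mu : ∀ A η p, WF (Ty.mu A) → ¬ IsTV (Ty.mu A) →
    I (.mu A) η p = I (unfoldMu A) η p

/-! ### Tail finiteness and related notions -/

/-- The sets `TF^V`. -/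
inductive TFmem : Set ℕ → Ty → Prop
  | var {V : Set ℕ} {X : ℕ} : X ∉ V → TFmem V (.var X)
  | box {V : Set ℕ} {A : Ty} : TFmem V A → TFmem V (.box A)
  | arrow {V : Set ℕ} (A : Ty) {B : Ty} : TFmem V B → TFmem V (.arrow A B)
  | mu {V : Set ℕ} {A : Ty} : WF (.mu A) → TFmem ({0} ∪ (Nat.succ '' V)) A → TFmem V (.mu A)

/-- Shapes `•^{m₀}(B₁ → •^{m₁}(B₂ → ⋯ → •^{m_{n-1}}(Bₙ → •^{mₙ} X)⋯))`. -/
inductive TFShape : Ty → Prop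
  | var (X : ℕ) : TFShape (.var X)
  | box {A : Ty} : TFShape A → TFShape (.box A)
  | arrow (A : Ty) {B : Ty} : TFShape B → TFShape (.arrow A B)

/-- Tail finite type expressions. -/
def TailFinite (A : Ty) : Prop := ∃ C, TFShape C ∧ WF C ∧ TyEq false A C

-- Effectively occurring type variables, positively (`petv`) and negatively (`netv`).
mutual
  def petv : Ty → Finset ℕ
    | .var X => {X}
    | .box A => if tvAux (.box A) 0 0 then ∅ else petv A
    | .arrow A B => if tvAux (.arrow A B) 0 0 then ∅ else netv A ∪ petv B
    | .mu A =>
        if tvAux (.mu A) 0 0 then ∅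
        else if 0 ∈ netv A then ((petv A ∪ netv A).erase 0).image (· - 1)
        else ((petv A).erase 0).image (· - 1)
  def netv : Ty → Finset ℕ
    | .var _ => ∅
    | .box A => if tvAux (.box A) 0 0 then ∅ else netv A
    | .arrow A B => if tvAux (.arrow A B) 0 0 then ∅ else petv A ∪ netv B
    | .mu A =>
        if tvAux (.mu A) 0 0 then ∅
        else if 0 ∈ netv A then ((netv A ∪ petv A).erase 0).image (· - 1)
        else ((netv A).erase 0).image (· - 1)
end

/-- Positively finite type expressions. -/
def PosFin (A : Ty) : Prop :=
  ∀ (s : Bool) (B C : Ty) (X : ℕ), WF B → WF C →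
    TyEq s A (substFree B X C) → X ∈ petv B → X ∉ netv B → TailFinite C

/-- Negatively finite type expressions. -/
def NegFin (A : Ty) : Prop :=
  ∀ (s : Bool) (B C : Ty) (X : ℕ), WF B → WF C →
    TyEq s A (substFree B X C) → X ∈ netv B → X ∉ petv B → TailFinite C

/-! ### Head normal forms, maximality, normal forms -/

/-- `y N₁ … Nₙ` with every argument satisfying `P`. -/
inductive SpineArgs (P : Tm → Prop) : Tm → Prop
  | fvar (x : ℕ) : SpineArgs P (.fvar x)
  | bvar (i : ℕ) : SpineArgs P (.bvar i)
  | app {M N : Tm} : SpineArgs P M → P N → SpineArgs P (.app M N)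

/-- Head normal forms `λx₁…λxₘ. y N₁ … Nₙ` whose arguments satisfy `P`. -/
inductive HNFP (P : Tm → Prop) : Tm → Prop
  | spine {M : Tm} : SpineArgs P M → HNFP P M
  | lam {M : Tm} : HNFP P M → HNFP P (.lam M)

/-- Head normal forms. -/
def HNF : Tm → Prop := HNFP fun _ => True

/-- Maximality at a given depth. -/
def MaxAt : ℕ → Tm → Prop
  | 0, _ => True
  | n + 1, M => ∃ M', Steps M M' ∧ HNFP (MaxAt n) M'

/-- Maximal λ-terms: the Böhm tree contains no `⊥`. -/
def Maximal (M : Tm) : Prop := ∀ n, MaxAt n M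

/-- β-normal forms. -/
def NormalForm (M : Tm) : Prop := ∀ N, ¬ Step M N

/-- Type expressions without any occurrence of the modal operator `•`. -/
def NoBox : Ty → Prop
  | .var _ => True
  | .arrow A B => NoBox A ∧ NoBox B
  | .box _ => False
  | .mu A => NoBox A

/-! ### The modal logic LAμ and its Kripke semantics -/

/-- The logic LAμ (formulae are type expressions). -/
inductive LAmu : Finset Ty → Ty → Prop
  | assump {Γ : Finset Ty} {A : Ty} : LAmu (insert A Γ) A
  | nec {Γ₁ : Finset Ty} (Γ₂ : Finset Ty) {A : Ty} :
      LAmu Γ₁ A → LAmu (Γ₁.image Ty.box ∪ Γ₂) (.box A)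
  | four {Γ : Finset Ty} {A : Ty} : LAmu Γ (.box A) → LAmu Γ (.box (.box A))
  | impI {Γ : Finset Ty} {A B : Ty} : LAmu (insert A Γ) B → LAmu Γ (.arrow A B)
  | impE {Γ₁ Γ₂ : Finset Ty} {A B : Ty} :
      LAmu Γ₁ (.arrow A B) → LAmu Γ₂ A → LAmu (Γ₁ ∪ Γ₂) B
  | fold {Γ : Finset Ty} {A : Ty} : LAmu Γ (unfoldMu A) → LAmu Γ (.mu A)
  | unfold {Γ : Finset Ty} {A : Ty} : LAmu Γ (.mu A) → LAmu Γ (unfoldMu A)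
  | lrule {Γ : Finset Ty} {A B : Ty} :
      LAmu Γ (.arrow (.box A) (.box B)) → LAmu Γ (.box (.arrow A B))
  | approx {Γ : Finset Ty} {A : Ty} : LAmu Γ A → LAmu Γ (.box A)

/-- The Kripke satisfaction relation over an LA-frame `(W, tri, R)` under a valuation `ξ`,
packaged with its defining (recursion) equations. -/
structure SatFun {W : Type*} (tri R : W → W → Prop) (ξ : ℕ → W → Prop) where
  sat : Ty → W → Prop
  sat_tv : ∀ A p, WF A → IsTV A → sat A p
  sat_var : ∀ X p, sat (.var X) p ↔ ξ X p
  sat_box : ∀ A p, WF A → ¬ IsTV (Ty.box A) →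
    (sat (.box A) p ↔ ∀ q, tri p q → sat A q)
  sat_arrow : ∀ A B p, WF A → WF B → ¬ IsTV (Ty.arrow A B) →
    (sat (.arrow A B) p ↔ ∀ q, R p q → sat A q → sat B q)
  sat_mu : ∀ A p, WF (Ty.mu A) → ¬ IsTV (Ty.mu A) →
    (sat (.mu A) p ↔ sat (unfoldMu A) p)

/-!
Follow the tail of a type expression through its `μ`-binders. It ends either at a free
variable `X` behind `n` occurrences of `•`, or at a variable bound by one of the `μ`s of the
tail. For a well-formed type the bound case always has a `•` inside the binder, so it is
exactly the case of a ⊤-variant, and then `A ≅ ⊤` by the uniqueness rule for fixed points. In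
the free case `A ∈ TF`, and unfolding the `μ`s of the tail gives an equivalent tail-finite
shape. The free end `(n, X)` is invariant under `≅` and `≃`; it exists for tail-finite shapes
and not for `⊤`, which separates the two cases.
-/

namespace Ty

def rlift (f : ℕ → ℕ) : ℕ → ℕ := fun n => match n with | 0 => 0 | Nat.succ m => f m + 1

def slift (σ : ℕ → Ty) : ℕ → Ty :=
  fun n => match n with | 0 => var 0 | Nat.succ m => shiftUp (σ m)

def scons (T : Ty) (σ : ℕ → Ty) : ℕ → Ty :=
  fun n => match n with | 0 => T | Nat.succ m => σ m

theorem rename_mu (f : ℕ → ℕ) (A : Ty) : rename f (mu A) = mu (rename (rlift f) A) := rfl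

theorem subst_mu (σ : ℕ → Ty) (A : Ty) : subst σ (mu A) = mu (subst (slift σ) A) := rfl

theorem rlift_injective {f : ℕ → ℕ} (hf : f.Injective) : (rlift f).Injective := by
  rintro (_ | a) (_ | b) hab <;> simp_all [rlift, hf.eq_iff]

theorem rename_rename (f g : ℕ → ℕ) (A : Ty) :
    rename f (rename g A) = rename (f ∘ g) A := by
  induction A generalizing f g with
  | var n => rfl
  | arrow A B ihA ihB => simp [rename, ihA, ihB]
  | box A ih => simp [rename, ih]
  | mu A ih =>
    simp only [rename_mu, ih]
    congr 2; funext n; cases n <;> rfl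

theorem subst_rename (σ : ℕ → Ty) (f : ℕ → ℕ) (A : Ty) :
    subst σ (rename f A) = subst (σ ∘ f) A := by
  induction A generalizing σ f with
  | var n => rfl
  | arrow A B ihA ihB => simp [rename, subst, ihA, ihB]
  | box A ih => simp [rename, subst, ih]
  | mu A ih =>
    simp only [rename_mu, subst_mu, ih]
    congr 2; funext n; cases n <;> rfl

theorem rename_subst (f : ℕ → ℕ) (σ : ℕ → Ty) (A : Ty) :
    rename f (subst σ A) = subst (rename f ∘ σ) A := by
  induction A generalizing σ f with
  | var n => rfl
  | arrow A B ihA ihB => simp [rename, subst, ihA, ihB]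
  | box A ih => simp [rename, subst, ih]
  | mu A ih =>
    simp only [rename_mu, subst_mu, ih]
    congr 2; funext n
    cases n with
    | zero => rfl
    | succ m => simp only [Function.comp, slift, shiftUp, rename_rename]; rfl

theorem subst_subst (σ τ : ℕ → Ty) (A : Ty) :
    subst σ (subst τ A) = subst (subst σ ∘ τ) A := by
  induction A generalizing σ τ with
  | var n => rfl
  | arrow A B ihA ihB => simp [subst, ihA, ihB]
  | box A ih => simp [subst, ih]
  | mu A ih =>
    simp only [subst_mu, ih]
    congr 2; funext n
    cases n with
    | zero => rfl
    | succ m => simp only [Function.comp, slift, shiftUp, subst_rename, rename_subst]; rfl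

theorem subst_var (A : Ty) : subst var A = A := by
  induction A with
  | var n => rfl
  | arrow A B ihA ihB => simp [subst, ihA, ihB]
  | box A ih => simp [subst, ih]
  | mu A ih =>
    have : slift var = var := by funext n; cases n <;> rfl
    rw [subst_mu, this, ih]

theorem openT_subst_slift (σ : ℕ → Ty) (A T : Ty) :
    openT (subst (slift σ) A) T = subst (scons T σ) A := by
  rw [openT, subst_subst]
  congr 1; funext n
  cases n with
  | zero => rfl
  | succ m => simp only [Function.comp, slift, shiftUp, subst_rename]; exact subst_var (σ m)

/-- Where the tail of a type expression ends: `.inr (n, X)` if at the free variable `X`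
behind `n` occurrences of `•`, and `.inl r` if at a variable bound by a `μ` of the tail,
where `r` records whether a `•` occurs between that `μ` and the variable. -/
def tailEnd : Ty → Bool ⊕ (ℕ × ℕ)
  | var X => .inr (0, X)
  | box A => match tailEnd A with
    | .inl r => .inl r
    | .inr (n, X) => .inr (n + 1, X)
  | arrow _ B => tailEnd B
  | mu A => match tailEnd A with
    | .inl r => .inl r
    | .inr (n, 0) => .inl (0 < n)
    | .inr (n, X + 1) => .inr (n, X)

theorem tailEnd_rename (f : ℕ → ℕ) (A : Ty) :
    (rename f A).tailEnd = match A.tailEnd with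
      | .inl r => .inl r
      | .inr (n, X) => .inr (n, f X) := by
  induction A generalizing f with
  | var X => rfl
  | box A ih => simp only [rename, tailEnd, ih]; rcases A.tailEnd with _ | ⟨n, X⟩ <;> rfl
  | arrow A B _ ih => exact ih f
  | mu A ih =>
    simp only [rename_mu, tailEnd, ih]
    rcases A.tailEnd with _ | ⟨n, _ | X⟩ <;> rfl

theorem tailEnd_subst (σ : ℕ → Ty) (A : Ty) :
    (subst σ A).tailEnd = match A.tailEnd with
      | .inl r => .inl r
      | .inr (n, X) => match (σ X).tailEnd with
        | .inl r => .inl r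
        | .inr (m, Y) => .inr (n + m, Y) := by
  induction A generalizing σ with
  | var X => simp only [subst, tailEnd]; rcases (σ X).tailEnd with _ | ⟨m, Y⟩ <;> simp
  | box A ih =>
    simp only [subst, tailEnd, ih]
    rcases A.tailEnd with _ | ⟨n, X⟩
    · rfl
    · rcases h : (σ X).tailEnd with _ | ⟨m, Y⟩ <;> simp [h, Nat.add_right_comm]
  | arrow A B _ ih => exact ih σ
  | mu A ih =>
    simp only [subst_mu, tailEnd, ih]
    rcases A.tailEnd with _ | ⟨n, _ | X⟩
    · rfl
    · rfl
    · simp only [slift, shiftUp, tailEnd_rename]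
      rcases (σ X).tailEnd with _ | ⟨m, Y⟩ <;> rfl

theorem tvAux_eq_true_iff (A : Ty) {d t : ℕ} (htd : t ≤ d) :
    tvAux A d t = true ↔ match A.tailEnd with
      | .inl r => r = true
      | .inr (n, X) => X < d ∧ (0 < n ∨ d - t ≤ X) := by
  induction A generalizing d t with
  | var X => simp [tvAux, tailEnd, and_comm]
  | box A ih =>
    rw [tvAux, ih le_rfl, tailEnd]
    rcases A.tailEnd with _ | ⟨n, X⟩ <;> simp
  | arrow A B _ ih => exact ih htd
  | mu A ih =>
    rw [tvAux, ih (by omega), tailEnd]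
    rcases A.tailEnd with _ | ⟨n, _ | X⟩ <;> simp <;> omega

theorem isTV_iff_tailEnd {A : Ty} : IsTV A ↔ A.tailEnd = .inl true := by
  rw [IsTV, tvAux_eq_true_iff A le_rfl]
  rcases A.tailEnd with _ | ⟨n, X⟩ <;> simp

end Ty

open Ty

theorem IsTV.rename {A : Ty} (f : ℕ → ℕ) (h : IsTV A) : IsTV (A.rename f) := by
  rw [isTV_iff_tailEnd] at h ⊢
  rw [tailEnd_rename, h]

theorem IsTV.subst {A : Ty} (σ : ℕ → Ty) (h : IsTV A) : IsTV (A.subst σ) := by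
  rw [isTV_iff_tailEnd] at h ⊢
  rw [tailEnd_subst, h]

theorem exists_freeInTy_of_freeInTy_rename {f : ℕ → ℕ} {A : Ty} {X : ℕ}
    (h : freeInTy X (rename f A)) : ∃ Y, freeInTy Y A ∧ f Y = X := by
  induction A generalizing f X with
  | var n => exact ⟨n, rfl, h⟩
  | box A ih => exact ih h
  | arrow A B ihA ihB =>
    rcases h with h | h
    · obtain ⟨Y, hY, rfl⟩ := ihA h; exact ⟨Y, Or.inl hY, rfl⟩
    · obtain ⟨Y, hY, rfl⟩ := ihB h; exact ⟨Y, Or.inr hY, rfl⟩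
  | mu A ih =>
    obtain ⟨_ | Y, hY, hfY⟩ := ih (f := rlift f) h
    · simp [rlift] at hfY
    · exact ⟨Y, hY, by simp only [rlift] at hfY; omega⟩

theorem not_freeInTy_zero_shiftUp (T : Ty) : ¬ freeInTy 0 (shiftUp T) := by
  intro h
  obtain ⟨Y, -, hY⟩ := exists_freeInTy_of_freeInTy_rename h
  exact Nat.succ_ne_zero Y hY

theorem not_freeInTy_succ_shiftUp {T : Ty} {X : ℕ} (h : ¬ freeInTy X T) :
    ¬ freeInTy (X + 1) (shiftUp T) := by
  intro hf
  obtain ⟨Y, hY, hYX⟩ := exists_freeInTy_of_freeInTy_rename hf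
  obtain rfl : Y = X := Nat.succ_injective hYX
  exact h hY

theorem proper_of_not_freeInTy {A : Ty} {X : ℕ} (h : ¬ freeInTy X A) : Proper A X := by
  induction A generalizing X with
  | var n => exact h
  | box A _ => trivial
  | arrow A B ihA ihB =>
    simp only [freeInTy, not_or] at h
    exact Or.inl ⟨ihA h.1, ihB h.2⟩
  | mu A ih => exact Or.inl (ih h)

theorem Proper.rename {f : ℕ → ℕ} (hf : f.Injective) {A : Ty} {X : ℕ} (h : Proper A X) :
    Proper (A.rename f) (f X) := by
  induction A generalizing f X with
  | var n => exact fun hn => h (hf hn)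
  | box A _ => trivial
  | arrow A B ihA ihB =>
    rcases h with ⟨hA, hB⟩ | h
    · exact Or.inl ⟨ihA hf hA, ihB hf hB⟩
    · exact Or.inr (IsTV.rename f h)
  | mu A ih =>
    rcases h with h | h
    · exact Or.inl (ih (rlift_injective hf) h)
    · exact Or.inr (IsTV.rename f h)

theorem WF.rename {f : ℕ → ℕ} (hf : f.Injective) {A : Ty} (h : WF A) : WF (A.rename f) := by
  induction A generalizing f with
  | var n => trivial
  | box A ih => exact ih hf h
  | arrow A B ihA ihB => exact ⟨ihA hf h.1, ihB hf h.2⟩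
  | mu A ih => exact ⟨ih (rlift_injective hf) h.1, h.2.rename (rlift_injective hf)⟩

theorem Proper.subst {σ : ℕ → Ty} {A : Ty} {X : ℕ} (hσX : σ X = var X)
    (hσ : ∀ Y, Y ≠ X → ¬ freeInTy X (σ Y)) (h : Proper A X) : Proper (A.subst σ) X := by
  induction A generalizing σ X with
  | var n => exact proper_of_not_freeInTy (hσ n h)
  | box A _ => trivial
  | arrow A B ihA ihB =>
    rcases h with ⟨hA, hB⟩ | h
    · exact Or.inl ⟨ihA hσX hσ hA, ihB hσX hσ hB⟩
    · exact Or.inr (IsTV.subst σ h)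
  | mu A ih =>
    rcases h with h | h
    · refine Or.inl (ih (by simp only [hσX]; rfl) ?_ h)
      rintro (_ | Y) hY
      · exact fun h0 => Nat.succ_ne_zero X h0.symm
      · exact not_freeInTy_succ_shiftUp (hσ Y (by omega))
    · exact Or.inr (IsTV.subst σ h)

theorem Proper.subst_slift (σ : ℕ → Ty) {A : Ty} (h : Proper A 0) :
    Proper (A.subst (slift σ)) 0 := by
  refine h.subst rfl ?_
  rintro (_ | Y) hY
  · exact absurd rfl hY
  · exact not_freeInTy_zero_shiftUp (σ Y)

theorem WF.subst {σ : ℕ → Ty} (hσ : ∀ X, WF (σ X)) {A : Ty} (h : WF A) :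
    WF (A.subst σ) := by
  induction A generalizing σ with
  | var n => exact hσ n
  | box A ih => exact ih hσ h
  | arrow A B ihA ihB => exact ⟨ihA hσ h.1, ihB hσ h.2⟩
  | mu A ih =>
    refine ⟨ih ?_ h.1, h.2.subst_slift σ⟩
    rintro (_ | Y)
    · trivial
    · exact (hσ Y).rename Nat.succ_injective

theorem Proper.tailEnd_ne {A : Ty} {X : ℕ} (h : Proper A X) : A.tailEnd ≠ .inr (0, X) := by
  induction A generalizing X with
  | var n =>
    simp only [tailEnd, ne_eq, Sum.inr.injEq, Prod.mk.injEq, true_and]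
    exact h
  | box A _ => simp only [tailEnd]; split <;> simp
  | arrow A B _ ih =>
    rcases h with ⟨-, h⟩ | h
    · exact ih h
    · rw [tailEnd, isTV_iff_tailEnd.1 h]; simp
  | mu A ih =>
    rcases h with h | h
    · have := ih h
      simp only [tailEnd]; split <;> simp_all
    · rw [isTV_iff_tailEnd.1 h]; simp

theorem WF.eq_true_of_tailEnd_eq_inl {A : Ty} {r : Bool} (hA : WF A)
    (h : A.tailEnd = .inl r) : r = true := by
  induction A with
  | var n => cases h
  | box A ih =>
    rcases hA' : A.tailEnd with r' | p <;> simp only [tailEnd, hA', reduceCtorEq] at h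
    · exact ih hA (hA'.trans h)
  | arrow A B _ ih => exact ih hA.2 h
  | mu A ih =>
    rcases hA' : A.tailEnd with r' | ⟨n, _ | X⟩ <;> simp only [tailEnd, hA', reduceCtorEq] at h
    · exact ih hA.1 (hA'.trans h)
    · have := hA.2.tailEnd_ne
      simp only [Sum.inl.injEq] at h
      rw [← h, decide_eq_true_eq, Nat.pos_iff_ne_zero]
      rintro rfl
      exact this hA'

theorem WF.not_isTV_iff {A : Ty} (hA : WF A) : ¬ IsTV A ↔ A.tailEnd.isRight := by
  rw [isTV_iff_tailEnd]
  rcases h : A.tailEnd with r | p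
  · simp [hA.eq_true_of_tailEnd_eq_inl h]
  · simp

theorem WF.tfmem_iff {A : Ty} (hA : WF A) {V : Set ℕ} :
    TFmem V A ↔ ∃ n, ∃ X ∉ V, A.tailEnd = .inr (n, X) := by
  induction A generalizing V with
  | var Y =>
    refine ⟨fun h => by cases h; exact ⟨0, Y, by assumption, rfl⟩, ?_⟩
    rintro ⟨n, X, hX, h⟩
    simp only [tailEnd, Sum.inr.injEq, Prod.mk.injEq] at h
    exact .var (h.2 ▸ hX)
  | box A ih =>
    have : TFmem V A.box ↔ TFmem V A := ⟨fun h => by cases h; assumption, .box⟩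
    rw [this, ih hA]
    rcases h : A.tailEnd with r | ⟨m, Y⟩ <;> simp [tailEnd, h]
  | arrow A B _ ih =>
    have : TFmem V (A.arrow B) ↔ TFmem V B := ⟨fun h => by cases h; assumption, .arrow A⟩
    rw [this, ih hA.2]
    rfl
  | mu A ih =>
    have : TFmem V A.mu ↔ TFmem ({0} ∪ Nat.succ '' V) A :=
      ⟨fun h => by cases h; assumption, .mu hA⟩
    rw [this, ih hA.1]
    rcases h : A.tailEnd with r | ⟨m, _ | Y⟩ <;>
      simp [tailEnd, h, ← Nat.succ_eq_add_one, Nat.succ_injective.mem_set_image, -Set.mem_image]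

theorem tailEnd_openT (A T : Ty) :
    (openT A T).tailEnd = match A.tailEnd with
      | .inl r => .inl r
      | .inr (n, 0) => match T.tailEnd with
        | .inl r => .inl r
        | .inr (m, Y) => .inr (n + m, Y)
      | .inr (n, X + 1) => .inr (n, X) := by
  rw [openT, tailEnd_subst]
  rcases A.tailEnd with r | ⟨n, _ | X⟩ <;> rfl

theorem TyEq.tailEnd_getRight?_eq {s : Bool} {A B : Ty} (h : TyEq s A B) :
    A.tailEnd.getRight? = B.tailEnd.getRight? := by
  induction h with
  | refl | arrowTop | kl => rfl
  | symm _ ih => exact ih.symm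
  | trans _ _ ih₁ ih₂ => exact ih₁.trans ih₂
  | @boxCongr _ A B _ ih =>
    rcases hA : A.tailEnd with _ | _ <;> rcases hB : B.tailEnd with _ | _ <;>
      simp_all [tailEnd]
  | arrowCongr _ _ _ ih => exact ih
  | fix s A =>
    rw [unfoldMu, tailEnd_openT]
    rcases hA : A.tailEnd with r | ⟨n, _ | X⟩ <;> simp [tailEnd, hA]
  | @uniq s A C _ hC ih =>
    -- `C` is proper in `0`, so a tail of `C` ending at `0` passes a `•`, and then
    -- `A ≅ C[A/0]` leaves `A` no free end.
    rw [tailEnd_openT] at ih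
    rcases hCt : C.tailEnd with r | ⟨n, _ | X⟩ <;> simp only [hCt] at ih
    · simpa [tailEnd, hCt] using ih
    · rcases hAt : A.tailEnd with r | ⟨m, Y⟩
      · simp [tailEnd, hCt]
      · simp only [hAt, Sum.getRight?_inr, Option.some.injEq, Prod.mk.injEq] at ih
        obtain rfl : n = 0 := by omega
        exact absurd hCt hC.tailEnd_ne
    · simpa [tailEnd, hCt] using ih

theorem tyEq_box_top (s : Bool) : TyEq s (box tyTop) tyTop :=
  (TyEq.fix s (box (var 0))).symm

theorem not_tyEq_top_of_tailEnd_isRight {s : Bool} {A : Ty} (h : A.tailEnd.isRight) :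
    ¬ TyEq s A tyTop := fun hA => by
  rw [← Sum.isSome_getRight?_iff_isRight, hA.tailEnd_getRight?_eq] at h
  cases h

/-- Generalizing over `σ` makes the induction structural: the unfolding `C[⊤/0]` of a
`μ`-body is again a substitution instance of `C`. -/
theorem tyEq_top_subst {B : Ty} (hB : WF B) {σ : ℕ → Ty}
    (hσ : ∀ n X, B.tailEnd = .inr (n, X) → TyEq false (σ X) tyTop) :
    TyEq false (B.subst σ) tyTop := by
  induction B generalizing σ with
  | var X => exact hσ 0 X rfl
  | box B ih =>
    have hB' := ih hB fun n X h => hσ (n + 1) X (by simp [tailEnd, h])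
    exact hB'.boxCongr.trans (tyEq_box_top false)
  | arrow A B _ ih =>
    exact (TyEq.arrowCongr (.refl _ (A.subst σ)) (ih hB.2 hσ)).trans (.arrowTop _ _)
  | mu C ih =>
    rw [subst_mu]
    refine .symm (.uniq ?_ (hB.2.subst_slift σ))
    rw [openT_subst_slift]
    refine .symm (ih hB.1 ?_)
    rintro n (_ | X) hC
    · exact .refl _ _
    · exact hσ n X (by simp [tailEnd, hC])

theorem WF.tyEq_top_of_isTV {A : Ty} (hA : WF A) (h : IsTV A) : TyEq false A tyTop := by
  simpa only [subst_var] using tyEq_top_subst hA (σ := var) fun n X hX => by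
    simp [isTV_iff_tailEnd.1 h] at hX

theorem TailFinite.of_tyEq {A B : Ty} (h : TyEq false A B) : TailFinite B → TailFinite A
  | ⟨C, hC, hWF, hBC⟩ => ⟨C, hC, hWF, h.trans hBC⟩

theorem tailFinite_var (X : ℕ) : TailFinite (var X) := ⟨_, .var X, trivial, .refl _ _⟩

theorem TailFinite.box {A : Ty} : TailFinite A → TailFinite A.box
  | ⟨_, hC, hWF, hAC⟩ => ⟨_, hC.box, hWF, hAC.boxCongr⟩

theorem TailFinite.arrow {A B : Ty} (hA : WF A) : TailFinite B → TailFinite (A.arrow B)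
  | ⟨_, hC, hWF, hBC⟩ => ⟨_, hC.arrow A, ⟨hA, hWF⟩, .arrowCongr (.refl _ A) hBC⟩

theorem tailFinite_subst {B : Ty} (hB : WF B) {σ : ℕ → Ty} (hσ : ∀ X, WF (σ X)) {n X : ℕ}
    (hBX : B.tailEnd = .inr (n, X)) (hX : TailFinite (σ X)) : TailFinite (B.subst σ) := by
  induction B generalizing σ n X with
  | var Y =>
    obtain rfl : Y = X := by simp_all [tailEnd]
    exact hX
  | box B ih =>
    rcases h : B.tailEnd with r | ⟨m, Y⟩ <;>
      simp only [tailEnd, h, reduceCtorEq, Sum.inr.injEq, Prod.mk.injEq] at hBX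
    exact (ih hB hσ h (hBX.2 ▸ hX)).box
  | arrow A B _ ih => exact (ih hB.2 hσ hBX hX).arrow (hB.1.subst hσ)
  | mu C ih =>
    rcases h : C.tailEnd with r | ⟨m, _ | Y⟩ <;>
      simp only [tailEnd, h, reduceCtorEq, Sum.inr.injEq, Prod.mk.injEq] at hBX
    rw [subst_mu]
    refine .of_tyEq (.fix false _) ?_
    rw [unfoldMu, openT_subst_slift]
    refine ih hB.1 ?_ h (hBX.2 ▸ hX)
    rintro (_ | Y)
    · exact hB.subst hσ
    · exact hσ Y

theorem WF.tailFinite_of_tailEnd_isRight {A : Ty} (hA : WF A) (h : A.tailEnd.isRight) :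
    TailFinite A := by
  obtain ⟨⟨n, X⟩, hX⟩ := Sum.isRight_iff.1 h
  simpa only [subst_var] using
    tailFinite_subst hA (σ := var) (fun _ => trivial) hX (tailFinite_var X)

theorem TFShape.tailEnd_isRight {C : Ty} (h : TFShape C) : C.tailEnd.isRight := by
  induction h with
  | var => rfl
  | @box C _ ih => rcases hC : C.tailEnd <;> simp_all [tailEnd]
  | arrow _ _ ih => exact ih

theorem TailFinite.tailEnd_isRight {A : Ty} : TailFinite A → A.tailEnd.isRight
  | ⟨_, hC, _, hAC⟩ => by
    rw [← Sum.isSome_getRight?_iff_isRight, hAC.tailEnd_getRight?_eq]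
    simpa using hC.tailEnd_isRight

/-- The four characterizations of tail finiteness are equivalent: (a) `A ∈ TF`;
(b) `A` is tail finite; (c) neither `A ≅ ⊤` nor `A ≃ ⊤`; (d) `A` is not a ⊤-variant. -/
theorem statement6 (A : Ty) (hA : WF A) :
    (TFmem ∅ A ↔ TailFinite A) ∧
      (TailFinite A ↔ (¬ TyEq false A tyTop ∧ ¬ TyEq true A tyTop)) ∧
      ((¬ TyEq false A tyTop ∧ ¬ TyEq true A tyTop) ↔ ¬ IsTV A) := by
  have hd : ¬ IsTV A ↔ A.tailEnd.isRight := hA.not_isTV_iff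
  have ha : TFmem ∅ A ↔ A.tailEnd.isRight := by
    simp only [hA.tfmem_iff, Set.mem_empty_iff_false, not_false_eq_true, true_and,
      Sum.isRight_iff, Prod.exists]
  have hb : TailFinite A ↔ A.tailEnd.isRight :=
    ⟨TailFinite.tailEnd_isRight, hA.tailFinite_of_tailEnd_isRight⟩
  have hc : (¬ TyEq false A tyTop ∧ ¬ TyEq true A tyTop) ↔ A.tailEnd.isRight :=
    ⟨fun h => hd.1 fun hTV => h.1 (hA.tyEq_top_of_isTV hTV),
      fun h => ⟨not_tyEq_top_of_tailEnd_isRight h, not_tyEq_top_of_tailEnd_isRight h⟩⟩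
  simp only [ha, hb, hc, hd, and_self]

end LambdaA
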